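/- arXiv:1302.1232 — 2 statements merged into one kernel-verified Lean document; each statement's English description precedes it below -/
import Mathlib

section
/- With X Hermitian, u a unit vector, θ ≠ 0, and z an eigenvalue of X + θ u u* which is not an eigenvalue of X, any unit eigenvector ũ of X + θ u u* for z satisfies |⟨ũ, u⟩|² = (u*(zI−X)⁻¹u)² / (u*(zI−X)⁻²u) = 1/(θ² · u*(zI−X)⁻²u). -/
/-!
Put `A = zI - X`. The eigenvector equation for the rank-one update reads
`A ũ = θ (u*ũ) u`, so `ũ = θ (u*ũ) A⁻¹u`. Normalising `ũ` and using that `A⁻¹` is Hermitian gives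
`1 = θ² |u*ũ|² u*A⁻²u`, which is the second formula; the first follows from it because
`u*A⁻¹u = 1/θ`.
-/

open Matrix

section RankOneUpdate

variable {n 𝕜 : Type*} [Fintype n] [DecidableEq n] [Field 𝕜] [StarRing 𝕜]
  {X : Matrix n n 𝕜} {u v : n → 𝕜} {θ z : 𝕜}

lemma sub_mulVec_eq_of_rankOne_update_mulVec_eq
    (hv : (X + θ • vecMulVec u (star u)) *ᵥ v = z • v) :
    (z • 1 - X) *ᵥ v = (θ * (star u ⬝ᵥ v)) • u := by
  rw [add_mulVec, smul_mulVec, vecMulVec_mulVec, op_smul_eq_smul] at hv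
  rw [sub_mulVec, smul_mulVec, one_mulVec, ← hv, mul_smul]
  abel

lemma eq_smul_inv_mulVec_of_rankOne_update_mulVec_eq (hz : IsUnit (z • 1 - X).det)
    (hv : (X + θ • vecMulVec u (star u)) *ᵥ v = z • v) :
    v = (θ * (star u ⬝ᵥ v)) • ((z • 1 - X)⁻¹ *ᵥ u) := by
  rw [← mulVec_smul, ← sub_mulVec_eq_of_rankOne_update_mulVec_eq hv, mulVec_mulVec,
    nonsing_inv_mul _ hz, one_mulVec]

lemma star_inv_mulVec_dotProduct_inv_mulVec {A : Matrix n n 𝕜} (hA : A.IsHermitian)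
    (u : n → 𝕜) :
    star (A⁻¹ *ᵥ u) ⬝ᵥ (A⁻¹ *ᵥ u) = star u ⬝ᵥ ((A⁻¹ * A⁻¹) *ᵥ u) := by
  rw [star_mulVec, hA.inv.eq, ← dotProduct_mulVec, mulVec_mulVec]

lemma star_dotProduct_mul_dotProduct_mul_eq_one_of_rankOne_update_mulVec_eq
    (hX : X.IsHermitian) (hθ : IsSelfAdjoint θ) (hz : IsSelfAdjoint z)
    (hdet : IsUnit (z • 1 - X).det) (hv₁ : star v ⬝ᵥ v = 1)
    (hv : (X + θ • vecMulVec u (star u)) *ᵥ v = z • v) :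
    star (star u ⬝ᵥ v) * (star u ⬝ᵥ v) *
      (θ ^ 2 * (star u ⬝ᵥ (((z • 1 - X)⁻¹ * (z • 1 - X)⁻¹) *ᵥ u))) = 1 := by
  have hA : (z • 1 - X).IsHermitian := (isHermitian_one.smul hz).sub hX
  rw [eq_smul_inv_mulVec_of_rankOne_update_mulVec_eq hdet hv, star_smul, smul_dotProduct,
    dotProduct_smul, star_inv_mulVec_dotProduct_inv_mulVec hA, star_mul, hθ.star_eq,
    smul_eq_mul, smul_eq_mul] at hv₁
  linear_combination hv₁

end RankOneUpdate

theorem stmt_3_general {n : ℕ} (X : Matrix (Fin n) (Fin n) ℂ) (hX : X.IsHermitian)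
    (u : Fin n → ℂ) (θ : ℝ)
    (z : ℝ)
    (hz : ((z : ℂ) • (1 : Matrix (Fin n) (Fin n) ℂ) - X).det ≠ 0)
    (heq : star u ⬝ᵥ (((z : ℂ) • (1 : Matrix (Fin n) (Fin n) ℂ) - X)⁻¹ *ᵥ u) = 1 / (θ : ℂ))
    (tu : Fin n → ℂ) (htu : star tu ⬝ᵥ tu = 1)
    (hvec : (X + (θ : ℂ) • vecMulVec u (star u)) *ᵥ tu = (z : ℂ) • tu) :
    ((‖star tu ⬝ᵥ u‖ : ℂ) ^ 2 =
        (star u ⬝ᵥ (((z : ℂ) • (1 : Matrix (Fin n) (Fin n) ℂ) - X)⁻¹ *ᵥ u)) ^ 2 /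
          (star u ⬝ᵥ ((((z : ℂ) • (1 : Matrix (Fin n) (Fin n) ℂ) - X)⁻¹ *
            ((z : ℂ) • (1 : Matrix (Fin n) (Fin n) ℂ) - X)⁻¹) *ᵥ u))) ∧
    (‖star tu ⬝ᵥ u‖ : ℂ) ^ 2 =
      1 / ((θ : ℂ) ^ 2 *
        (star u ⬝ᵥ ((((z : ℂ) • (1 : Matrix (Fin n) (Fin n) ℂ) - X)⁻¹ *
          ((z : ℂ) • (1 : Matrix (Fin n) (Fin n) ℂ) - X)⁻¹) *ᵥ u))) := by
  have hnorm : (‖star tu ⬝ᵥ u‖ : ℂ) ^ 2 = star (star u ⬝ᵥ tu) * (star u ⬝ᵥ tu) := by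
    rw [star_dotProduct, norm_star, ← Complex.conj_mul', Complex.star_def]
  have hnormalized :=
    star_dotProduct_mul_dotProduct_mul_eq_one_of_rankOne_update_mulVec_eq hX
      (Complex.conj_ofReal θ) (Complex.conj_ofReal z) (isUnit_iff_ne_zero.mpr hz) htu hvec
  have hsecond := hnorm ▸ eq_one_div_of_mul_eq_one_left hnormalized
  refine ⟨?_, hsecond⟩
  rw [hsecond, heq, div_pow, one_pow, div_div]

theorem stmt_3 {n : ℕ} (X : Matrix (Fin n) (Fin n) ℂ) (hX : X.IsHermitian)
    (u : Fin n → ℂ) (hu : star u ⬝ᵥ u = 1) (θ : ℝ) (hθ : θ ≠ 0)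
    (z : ℝ)
    (hz : ((z : ℂ) • (1 : Matrix (Fin n) (Fin n) ℂ) - X).det ≠ 0)
    (heq : star u ⬝ᵥ (((z : ℂ) • (1 : Matrix (Fin n) (Fin n) ℂ) - X)⁻¹ *ᵥ u) = 1 / (θ : ℂ))
    (tu : Fin n → ℂ) (htu : star tu ⬝ᵥ tu = 1)
    (hvec : (X + (θ : ℂ) • vecMulVec u (star u)) *ᵥ tu = (z : ℂ) • tu) :
    ((‖star tu ⬝ᵥ u‖ : ℂ) ^ 2 =
        (star u ⬝ᵥ (((z : ℂ) • (1 : Matrix (Fin n) (Fin n) ℂ) - X)⁻¹ *ᵥ u)) ^ 2 /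
          (star u ⬝ᵥ ((((z : ℂ) • (1 : Matrix (Fin n) (Fin n) ℂ) - X)⁻¹ *
            ((z : ℂ) • (1 : Matrix (Fin n) (Fin n) ℂ) - X)⁻¹) *ᵥ u))) ∧
    (‖star tu ⬝ᵥ u‖ : ℂ) ^ 2 =
      1 / ((θ : ℂ) ^ 2 *
        (star u ⬝ᵥ ((((z : ℂ) • (1 : Matrix (Fin n) (Fin n) ℂ) - X)⁻¹ *
          ((z : ℂ) • (1 : Matrix (Fin n) (Fin n) ℂ) - X)⁻¹) *ᵥ u))) :=
  stmt_3_general X hX u θ z hz heq tu htu hvec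
end

section
/- Let X be Hermitian, u a unit vector, θ ≠ 0, and z an eigenvalue of X̃ = X + θuu* with zI − X invertible. Writing μ for the weighted spectral measure of X with respect to u, the unit eigenvector ũ of X̃ at z satisfies |⟨ũ, u⟩|² = −1/(θ² G_μ'(z)), where G_μ'(z) = −∫ dμ(x)/(z−x)². In particular |⟨ũ,u⟩|² ≤ 1, i.e., ∫ dμ(x)/(z−x)² ≥ (∫ dμ(x)/(z−x))². -/
/-!
Expanding in the eigenbasis `q` of `X`, the eigenvalue equation for `X + θ u u*` at `z` reads
`(z - λᵢ) ⟨qᵢ, ũ⟩ = θ ⟨u, ũ⟩ ⟨qᵢ, u⟩`. Taking squared moduli, dividing by `(z - λᵢ)²` and summing,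
Parseval turns the left side into `‖ũ‖² = 1`, so `θ² |⟨u, ũ⟩|² ∫ dμ(x) / (z - x)² = 1`.
The bound `|⟨ũ, u⟩|² ≤ 1` is Cauchy–Schwarz for the unit vectors `ũ, u`, and the last inequality
is Cauchy–Schwarz for the probability measure `μ = ∑ᵢ |⟨qᵢ, u⟩|² δ_{λᵢ}`.
-/

open Matrix

section

variable {ι 𝕜 : Type*} [Fintype ι] [RCLike 𝕜]

theorem dotProduct_star_self_eq_sum_norm_sq (x : ι → 𝕜) :
    star x ⬝ᵥ x = ((∑ i, ‖x i‖ ^ 2 : ℝ) : 𝕜) := by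
  push_cast
  exact Finset.sum_congr rfl fun i _ => RCLike.conj_mul (x i)

theorem norm_star_dotProduct_le_one {x y : ι → 𝕜} (hx : star x ⬝ᵥ x = 1)
    (hy : star y ⬝ᵥ y = 1) : ‖star x ⬝ᵥ y‖ ≤ 1 := by
  have norm_toLp : ∀ v : ι → 𝕜, star v ⬝ᵥ v = 1 → ‖WithLp.toLp 2 v‖ = 1 := fun v hv => by
    have h : (‖WithLp.toLp 2 v‖ : 𝕜) ^ 2 = 1 := by
      rw [← inner_self_eq_norm_sq_to_K, EuclideanSpace.inner_toLp_toLp, dotProduct_comm, hv]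
    exact (pow_eq_one_iff_of_nonneg (norm_nonneg _) two_ne_zero).1 (by exact_mod_cast h)
  calc ‖star x ⬝ᵥ y‖ = ‖inner 𝕜 (WithLp.toLp 2 x) (WithLp.toLp 2 y)‖ := by
        rw [EuclideanSpace.inner_toLp_toLp, dotProduct_comm]
    _ ≤ ‖WithLp.toLp 2 x‖ * ‖WithLp.toLp 2 y‖ := norm_inner_le_norm _ _
    _ = 1 := by rw [norm_toLp x hx, norm_toLp y hy, one_mul]

variable [DecidableEq ι]

theorem star_dotProduct_eq_sum_of_orthonormal {q : ι → ι → 𝕜}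
    (horth : ∀ i j, star (q i) ⬝ᵥ q j = if i = j then 1 else 0) (x y : ι → 𝕜) :
    star x ⬝ᵥ y = ∑ i, star (star (q i) ⬝ᵥ x) * (star (q i) ⬝ᵥ y) := by
  set Q : Matrix ι ι 𝕜 := Matrix.of fun i => star (q i)
  have hQQ : Q * Qᴴ = 1 := by
    ext i j
    simpa [Q, Matrix.mul_apply, Matrix.one_apply, dotProduct] using horth i j
  have hQ : ∀ v, Q *ᵥ v = fun i => star (q i) ⬝ᵥ v := fun v => rfl
  calc star x ⬝ᵥ y = star x ⬝ᵥ (Qᴴ * Q) *ᵥ y := by rw [mul_eq_one_comm.1 hQQ, one_mulVec]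
    _ = star (Q *ᵥ x) ⬝ᵥ Q *ᵥ y := by
        rw [star_mulVec, ← dotProduct_mulVec, mulVec_mulVec]
    _ = _ := by rw [hQ, hQ]; rfl

theorem sum_norm_sq_dotProduct_of_orthonormal {q : ι → ι → 𝕜}
    (horth : ∀ i j, star (q i) ⬝ᵥ q j = if i = j then 1 else 0) (x : ι → 𝕜) :
    ((∑ i, ‖star (q i) ⬝ᵥ x‖ ^ 2 : ℝ) : 𝕜) = star x ⬝ᵥ x := by
  rw [star_dotProduct_eq_sum_of_orthonormal horth x x, ← dotProduct_star_self_eq_sum_norm_sq]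
  rfl

end

namespace Matrix.IsHermitian

variable {ι 𝕜 : Type*} [Fintype ι] [RCLike 𝕜] {X : Matrix ι ι 𝕜}

theorem star_vecMul_eq_of_mulVec_eq (hX : X.IsHermitian) {q : ι → 𝕜} {lam : ℝ}
    (hq : X *ᵥ q = (lam : 𝕜) • q) : star q ᵥ* X = (lam : 𝕜) • star q := by
  have h := congrArg star hq
  rwa [star_mulVec, hX.eq, star_smul, RCLike.star_def, RCLike.conj_ofReal] at h

theorem sub_mul_dotProduct_eq_of_rankOne_eigenvector (hX : X.IsHermitian) {q u v : ι → 𝕜}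
    {lam : ℝ} {θ z : 𝕜} (hq : X *ᵥ q = (lam : 𝕜) • q)
    (hv : (X + θ • vecMulVec u (star u)) *ᵥ v = z • v) :
    (z - lam) * (star q ⬝ᵥ v) = θ * (star u ⬝ᵥ v) * (star q ⬝ᵥ u) := by
  have h := congrArg (star q ⬝ᵥ ·) hv
  simp only [add_mulVec, dotProduct_add, dotProduct_mulVec, hX.star_vecMul_eq_of_mulVec_eq hq,
    smul_mulVec, vecMulVec_mulVec, dotProduct_smul, smul_dotProduct, op_smul_eq_mul,
    smul_eq_mul] at h
  linear_combination -h

theorem sq_mul_norm_sq_mul_sum_eq_of_rankOne_eigenvector (hX : X.IsHermitian) {lam : ι → ℝ}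
    {q : ι → ι → 𝕜} (heig : ∀ i, X *ᵥ q i = (lam i : 𝕜) • q i) {u v : ι → 𝕜} {θ z : ℝ}
    (hz : ∀ i, z ≠ lam i) (hv : (X + (θ : 𝕜) • vecMulVec u (star u)) *ᵥ v = (z : 𝕜) • v) :
    θ ^ 2 * ‖star u ⬝ᵥ v‖ ^ 2 * ∑ i, ‖star (q i) ⬝ᵥ u‖ ^ 2 / (z - lam i) ^ 2 =
      ∑ i, ‖star (q i) ⬝ᵥ v‖ ^ 2 := by
  rw [Finset.mul_sum]
  refine Finset.sum_congr rfl fun i _ => ?_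
  have h := congrArg (‖·‖ ^ 2) (hX.sub_mul_dotProduct_eq_of_rankOne_eigenvector (heig i) hv)
  have hzi : z - lam i ≠ 0 := sub_ne_zero.2 (hz i)
  rw [← RCLike.ofReal_sub] at h
  simp only [norm_mul, mul_pow, RCLike.norm_ofReal, sq_abs] at h
  field_simp
  linear_combination -h

end Matrix.IsHermitian

theorem sq_sum_div_le_sum_div_sq {ι : Type*} (s : Finset ι) {w : ι → ℝ} (hw : ∀ i ∈ s, 0 ≤ w i)
    (hw1 : ∑ i ∈ s, w i = 1) (d : ι → ℝ) :
    (∑ i ∈ s, w i / d i) ^ 2 ≤ ∑ i ∈ s, w i / d i ^ 2 := by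
  have h := Finset.sum_sq_le_sum_mul_sum_of_sq_le_mul s hw
    (fun i hi => div_nonneg (hw i hi) (sq_nonneg (d i))) (r := fun i => w i / d i)
    (fun i _ => by rw [div_pow, sq (w i), mul_div_assoc])
  rwa [hw1, one_mul] at h

theorem stmt_19_general {n : ℕ} (X : Matrix (Fin n) (Fin n) ℂ) (hX : X.IsHermitian)
    (lam : Fin n → ℝ) (q : Fin n → Fin n → ℂ)
    (heig : ∀ i, X *ᵥ q i = (lam i : ℂ) • q i)
    (horth : ∀ i j, star (q i) ⬝ᵥ q j = if i = j then 1 else 0)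
    (u : Fin n → ℂ) (hu : star u ⬝ᵥ u = 1)
    (θ : ℝ) (z : ℝ) (hz : ∀ i, z ≠ lam i)
    (tu : Fin n → ℂ) (htu : star tu ⬝ᵥ tu = 1)
    (hvec : (X + (θ : ℂ) • vecMulVec u (star u)) *ᵥ tu = (z : ℂ) • tu) :
    ‖star tu ⬝ᵥ u‖ ^ 2 =
      1 / (θ ^ 2 * ∑ i, ‖star (q i) ⬝ᵥ u‖ ^ 2 / (z - lam i) ^ 2) ∧
    ‖star tu ⬝ᵥ u‖ ^ 2 ≤ 1 ∧
    (∑ i, ‖star (q i) ⬝ᵥ u‖ ^ 2 / (z - lam i)) ^ 2 ≤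
      ∑ i, ‖star (q i) ⬝ᵥ u‖ ^ 2 / (z - lam i) ^ 2 := by
  have hkey : θ ^ 2 * ‖star u ⬝ᵥ tu‖ ^ 2 * ∑ i, ‖star (q i) ⬝ᵥ u‖ ^ 2 / (z - lam i) ^ 2 = 1 := by
    rw [hX.sq_mul_norm_sq_mul_sum_eq_of_rankOne_eigenvector heig hz hvec]
    exact Complex.ofReal_eq_one.1 ((sum_norm_sq_dotProduct_of_orthonormal horth tu).trans htu)
  have hswap : ‖star tu ⬝ᵥ u‖ = ‖star u ⬝ᵥ tu‖ := by rw [star_dotProduct, norm_star]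
  refine ⟨?_, pow_le_one₀ (norm_nonneg _) (norm_star_dotProduct_le_one htu hu), ?_⟩
  · rw [hswap]
    exact eq_one_div_of_mul_eq_one_left (by linear_combination hkey)
  · refine sq_sum_div_le_sum_div_sq _ (fun i _ => sq_nonneg _) ?_ _
    exact Complex.ofReal_eq_one.1 ((sum_norm_sq_dotProduct_of_orthonormal horth u).trans hu)

theorem stmt_19 {n : ℕ} (X : Matrix (Fin n) (Fin n) ℂ) (hX : X.IsHermitian)
    (lam : Fin n → ℝ) (q : Fin n → Fin n → ℂ)
    (heig : ∀ i, X *ᵥ q i = (lam i : ℂ) • q i)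
    (horth : ∀ i j, star (q i) ⬝ᵥ q j = if i = j then 1 else 0)
    (u : Fin n → ℂ) (hu : star u ⬝ᵥ u = 1)
    (θ : ℝ) (hθ : θ ≠ 0) (z : ℝ) (hz : ∀ i, z ≠ lam i)
    (heq : ∑ i, ‖star (q i) ⬝ᵥ u‖ ^ 2 / (z - lam i) = 1 / θ)
    (tu : Fin n → ℂ) (htu : star tu ⬝ᵥ tu = 1)
    (hvec : (X + (θ : ℂ) • vecMulVec u (star u)) *ᵥ tu = (z : ℂ) • tu) :
    ‖star tu ⬝ᵥ u‖ ^ 2 =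
      1 / (θ ^ 2 * ∑ i, ‖star (q i) ⬝ᵥ u‖ ^ 2 / (z - lam i) ^ 2) ∧
    ‖star tu ⬝ᵥ u‖ ^ 2 ≤ 1 ∧
    (∑ i, ‖star (q i) ⬝ᵥ u‖ ^ 2 / (z - lam i)) ^ 2 ≤
      ∑ i, ‖star (q i) ⬝ᵥ u‖ ^ 2 / (z - lam i) ^ 2 :=
  stmt_19_general X hX lam q heig horth u hu θ z hz tu htu hvec
end
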